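/- arXiv:2511.15634 — 2 statements merged into one kernel-verified Lean document; each statement's English description precedes it below -/
import Mathlib

section
/- For all real numbers $\beta \geq 2$ and all $a, b \geq 0$, the inequality $(a^{\beta/2} - b^{\beta/2})^2 \leq a^{\beta} + (\beta - 1) b^{\beta} - \beta a b^{\beta - 1}$ holds. -/
private lemma bregman_key (β t : ℝ) (hβ : 2 ≤ β) (ht : 0 ≤ t) :
    β * t ≤ 2 * t ^ (β / 2) + (β - 2) := by
  have h := one_add_mul_self_le_rpow_one_add (by linarith : (-1:ℝ) ≤ t - 1)
    (by linarith : 1 ≤ β / 2)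
  have h1 : (1 : ℝ) + (t - 1) = t := by ring
  rw [h1] at h
  nlinarith [h]

/-- For all `β ≥ 2` and `a, b ≥ 0`,
`(a^(β/2) - b^(β/2))^2 ≤ a^β + (β - 1) * b^β - β * a * b^(β-1)`. -/
theorem bregman_sqrt_inequality (β a b : ℝ) (hβ : 2 ≤ β) (ha : 0 ≤ a) (hb : 0 ≤ b) :
    (a ^ (β / 2) - b ^ (β / 2)) ^ 2 ≤ a ^ β + (β - 1) * b ^ β - β * a * b ^ (β - 1) := by
  have ha2 : (a ^ (β / 2)) ^ 2 = a ^ β := by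
    rw [← Real.rpow_natCast (a ^ (β / 2)) 2, ← Real.rpow_mul ha]
    norm_num
  have hb2 : (b ^ (β / 2)) ^ 2 = b ^ β := by
    rw [← Real.rpow_natCast (b ^ (β / 2)) 2, ← Real.rpow_mul hb]
    norm_num
  rcases eq_or_lt_of_le hb with hb0 | hb0
  · rw [← hb0]
    rw [Real.zero_rpow (by positivity), Real.zero_rpow (by linarith),
      Real.zero_rpow (by linarith)]
    nlinarith [ha2]
  · -- b > 0
    have ht : 0 ≤ a / b := div_nonneg ha hb0.le
    have key := bregman_key β (a / b) hβ ht
    have hbβ : (0:ℝ) < b ^ β := Real.rpow_pos_of_pos hb0 β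
    have hbh : (0:ℝ) < b ^ (β / 2) := Real.rpow_pos_of_pos hb0 (β / 2)
    have h1 : (a / b) * b ^ β = a * b ^ (β - 1) := by
      rw [Real.rpow_sub hb0, Real.rpow_one]
      field_simp
    have h2 : (a / b) ^ (β / 2) * b ^ β = a ^ (β / 2) * b ^ (β / 2) := by
      rw [Real.div_rpow ha hb0.le]
      have : b ^ β = b ^ (β / 2) * b ^ (β / 2) := by
        rw [← Real.rpow_add hb0]; ring_nf
      rw [this]
      field_simp
    have key2 : β * (a * b ^ (β - 1)) ≤ 2 * (a ^ (β / 2) * b ^ (β / 2)) + (β - 2) * b ^ β := by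
      calc β * (a * b ^ (β - 1)) = (β * (a / b)) * b ^ β := by rw [← h1]; ring
        _ ≤ (2 * (a / b) ^ (β / 2) + (β - 2)) * b ^ β := by
            apply mul_le_mul_of_nonneg_right key hbβ.le
        _ = 2 * (a ^ (β / 2) * b ^ (β / 2)) + (β - 2) * b ^ β := by
            rw [add_mul, mul_assoc, h2]
    nlinarith [ha2, hb2, key2]
end

section
/- Let $f : [0, \infty) \to [0, \infty)$ be continuous on $[0,\infty)$, differentiable on $(0,\infty)$, satisfying $f'(t) \leq K - a(1 - e^{-f(t)})$ for all $t > 0$ with $0 < K < a$, and suppose $f(0) > \log\big(\frac{a}{a-K}\big)$. Then for all $t > 0$, $f(t) \leq \log\big(\frac{a}{a-K}\big) + \log\Big(1 + e^{-(a-K)t}\big(e^{f(0)} \frac{a-K}{a} - 1\big)\Big)$. -/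
open Real

/-- If `f : [0,∞) → [0,∞)` is continuous, differentiable on `(0,∞)`, satisfies
`f'(t) ≤ K - a (1 - e^{-f(t)})` for `t > 0` with `0 < K < a`, and `f(0) > log(a/(a-K))`,
then `f(t) ≤ log(a/(a-K)) + log (1 + e^{-(a-K)t} (e^{f(0)} (a-K)/a - 1))` for all `t > 0`. -/
theorem differential_inequality_decay
    (f : ℝ → ℝ) (a K : ℝ) (hK : 0 < K) (hKa : K < a)
    (hf_nonneg : ∀ t, 0 ≤ t → 0 ≤ f t)
    (hf_cont : ContinuousOn f (Set.Ici 0))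
    (hf_diff : ∀ t, 0 < t → DifferentiableAt ℝ f t)
    (hf_ineq : ∀ t, 0 < t → deriv f t ≤ K - a * (1 - Real.exp (-(f t))))
    (hf0 : Real.log (a / (a - K)) < f 0) :
    ∀ t, 0 < t →
      f t ≤ Real.log (a / (a - K)) +
        Real.log (1 + Real.exp (-(a - K) * t) * (Real.exp (f 0) * (a - K) / a - 1)) := by
  intro t ht
  have hb : 0 < a - K := by linarith
  have ha : 0 < a := by linarith
  set c := a / (a - K) with hc
  have hc0 : 0 < c := by positivity
  have hcs : (a - K) * c = a := by rw [hc]; field_simp [hb.ne']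
  set h : ℝ → ℝ := fun s => (Real.exp (f s) - c) * Real.exp ((a - K) * s) with hh
  have hanti : AntitoneOn h (Set.Ici (0:ℝ)) := by
    apply antitoneOn_of_deriv_nonpos (convex_Ici 0)
    · exact ((Real.continuous_exp.comp_continuousOn hf_cont).sub continuousOn_const).mul
        (Continuous.continuousOn (by continuity))
    · intro s hs
      rw [interior_Ici] at hs
      exact (((Real.differentiable_exp.differentiableAt.comp s (hf_diff s hs)).sub
        (differentiableAt_const c)).mul ((differentiableAt_id.const_mul (a - K)).exp)).differentiableWithinAt
    · intro s hs
      rw [interior_Ici] at hs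
      have hfd : HasDerivAt f (deriv f s) s := (hf_diff s hs).hasDerivAt
      have h1 : HasDerivAt (fun u => Real.exp (f u) - c)
          (Real.exp (f s) * deriv f s) s := hfd.exp.sub_const c
      have h2 : HasDerivAt (fun u => Real.exp ((a - K) * u))
          ((a - K) * Real.exp ((a - K) * s)) s := by
        simpa [mul_comm] using (((hasDerivAt_id s).const_mul (a - K)).exp)
      have h3 := h1.mul h2
      rw [hh, show (fun s => (Real.exp (f s) - c) * Real.exp ((a - K) * s)) = ((fun u => Real.exp (f u) - c) * fun u => Real.exp ((a - K) * u)) from rfl, h3.deriv]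
      have hineq := hf_ineq s hs
      have hfx : Real.exp (f s) * deriv f s ≤ (K - a) * Real.exp (f s) + a := by
        have hm := mul_le_mul_of_nonneg_left hineq (Real.exp_pos (f s)).le
        have hexp : Real.exp (f s) * Real.exp (-(f s)) = 1 := by
          rw [← Real.exp_add]; simp
        nlinarith [Real.exp_pos (f s)]
      nlinarith [Real.exp_pos ((a - K) * s), Real.exp_pos (f s)]
  have hle : h t ≤ h 0 := hanti Set.self_mem_Ici (Set.mem_Ici.mpr ht.le) ht.le
  have hinv : Real.exp ((a - K) * t) * Real.exp (-(a - K) * t) = 1 := by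
    rw [← Real.exp_add, show (a - K) * t + -(a - K) * t = 0 by ring, Real.exp_zero]
  have key : Real.exp (f t) ≤ c + (Real.exp (f 0) - c) * Real.exp (-(a - K) * t) := by
    have h0 : h 0 = Real.exp (f 0) - c := by simp [hh]
    have ht' : h t = (Real.exp (f t) - c) * Real.exp ((a - K) * t) := rfl
    rw [h0, ht'] at hle
    have hm := mul_le_mul_of_nonneg_right hle (Real.exp_pos (-(a - K) * t)).le
    rw [mul_assoc, hinv, mul_one] at hm
    linarith
  have hE : 0 < Real.exp (f 0) * (a - K) / a - 1 := by
    have : c < Real.exp (f 0) := by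
      calc c = Real.exp (Real.log c) := (Real.exp_log hc0).symm
        _ < Real.exp (f 0) := Real.exp_lt_exp.mpr hf0
    rw [hc] at this
    rw [div_lt_iff₀ hb] at this; rw [sub_pos, lt_div_iff₀ ha]
    nlinarith
  have hX : 0 < 1 + Real.exp (-(a - K) * t) * (Real.exp (f 0) * (a - K) / a - 1) := by
    positivity
  have hfinal : Real.exp (f t) ≤ Real.exp (Real.log (a / (a - K)) +
      Real.log (1 + Real.exp (-(a - K) * t) * (Real.exp (f 0) * (a - K) / a - 1))) := by
    rw [Real.exp_add, Real.exp_log hc0, Real.exp_log hX]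
    calc Real.exp (f t) ≤ c + (Real.exp (f 0) - c) * Real.exp (-(a - K) * t) := key
      _ = c * (1 + Real.exp (-(a - K) * t) * (Real.exp (f 0) * (a - K) / a - 1)) := by
        rw [hc]; field_simp
  exact Real.exp_le_exp.mp hfinal
end
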